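/- For every integer k ≥ 3, the chromatic number of the graph G_k equals k + 1. -/
import Mathlib


open SimpleGraph

/-- The vertices of the gadget `G_k`: three cliques `U`, `W` (called `V` in the paper)
and `M` of size `k` each (the distinguished vertex `w` of `M` is `M i` with `i.val = 0`),
together with four special vertices `u, u', v, v'`. -/
inductive GkVert (k : ℕ) where
  | U : Fin k → GkVert k
  | W : Fin k → GkVert k
  | M : Fin k → GkVert k
  | u : GkVert k
  | u' : GkVert k
  | v : GkVert k
  | v' : GkVert k
deriving DecidableEq

/-- The gadget `G_k`: `U`, `W` and `M` are cliques, `u` and `u'` are complete to `U`,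
`v` and `v'` are complete to `W`, `u` and `v` are complete to `M ∖ {w}`, and
`u'` and `v'` are adjacent to `w` (where `w` is the vertex `M i` with `i.val = 0`). -/
def Gk (k : ℕ) : SimpleGraph (GkVert k) :=
  SimpleGraph.fromRel (fun a b =>
    (∃ i j, a = GkVert.U i ∧ b = GkVert.U j) ∨
    (∃ i j, a = GkVert.W i ∧ b = GkVert.W j) ∨
    (∃ i j, a = GkVert.M i ∧ b = GkVert.M j) ∨
    (∃ i, a = GkVert.u ∧ b = GkVert.U i) ∨
    (∃ i, a = GkVert.u' ∧ b = GkVert.U i) ∨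
    (∃ i, a = GkVert.v ∧ b = GkVert.W i) ∨
    (∃ i, a = GkVert.v' ∧ b = GkVert.W i) ∨
    (∃ i : Fin k, i.val ≠ 0 ∧ a = GkVert.u ∧ b = GkVert.M i) ∨
    (∃ i : Fin k, i.val ≠ 0 ∧ a = GkVert.v ∧ b = GkVert.M i) ∨
    (∃ i : Fin k, i.val = 0 ∧ a = GkVert.u' ∧ b = GkVert.M i) ∨
    (∃ i : Fin k, i.val = 0 ∧ a = GkVert.v' ∧ b = GkVert.M i))


/-- A proper `(k+1)`-coloring of `G_k`. -/
def GkCol (k : ℕ) : GkVert k → Fin (k + 1)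
  | GkVert.U i => i.castSucc
  | GkVert.W i => i.castSucc
  | GkVert.M i => i.castSucc
  | _ => Fin.last k

lemma gk_colorable (k : ℕ) : (Gk k).Colorable (k + 1) := by
  refine ⟨SimpleGraph.Coloring.mk (GkCol k) ?_⟩
  intro a b h
  rw [Gk, SimpleGraph.fromRel_adj] at h
  obtain ⟨hne, h | h⟩ := h <;>
  rcases h with ⟨i,j,rfl,rfl⟩|⟨i,j,rfl,rfl⟩|⟨i,j,rfl,rfl⟩|⟨i,rfl,rfl⟩|⟨i,rfl,rfl⟩|⟨i,rfl,rfl⟩|⟨i,rfl,rfl⟩|⟨i,hi,rfl,rfl⟩|⟨i,hi,rfl,rfl⟩|⟨i,hi,rfl,rfl⟩|⟨i,hi,rfl,rfl⟩ <;>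
  simp_all [GkCol, Fin.castSucc_inj, (Fin.castSucc_lt_last _).ne, (Fin.castSucc_lt_last _).ne']


theorem statement2 (k : ℕ) (hk : 3 ≤ k) :
    (Gk k).chromaticNumber = (k + 1 : ℕ) := by
  refine le_antisymm (SimpleGraph.chromaticNumber_le_iff_colorable.mpr (gk_colorable k)) ?_
  have hclique : (Gk k).IsClique
      (insert GkVert.u (Finset.univ.image (GkVert.U : Fin k → GkVert k)) : Finset (GkVert k)) := by
    intro a ha b hb hab
    simp only [Finset.coe_insert, Set.mem_insert_iff, Finset.coe_image, Finset.coe_univ,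
      Set.image_univ, Set.mem_range] at ha hb
    rw [Gk, SimpleGraph.fromRel_adj]
    refine ⟨hab, ?_⟩
    rcases ha with rfl | ⟨i, rfl⟩ <;> rcases hb with rfl | ⟨j, rfl⟩
    · exact absurd rfl hab
    · exact Or.inl (Or.inr <| Or.inr <| Or.inr <| Or.inl ⟨j, rfl, rfl⟩)
    · exact Or.inr (Or.inr <| Or.inr <| Or.inr <| Or.inl ⟨i, rfl, rfl⟩)
    · exact Or.inl (Or.inl ⟨i, j, rfl, rfl⟩)
  have hcard : (insert GkVert.u (Finset.univ.image (GkVert.U : Fin k → GkVert k)) :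
      Finset (GkVert k)).card = k + 1 := by
    rw [Finset.card_insert_of_notMem (by simp), Finset.card_image_of_injective _
      (fun a b h => by injection h)]
    simp
  have := hclique.card_le_chromaticNumber
  rwa [hcard] at this
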